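/- Let t ∈ ℝ \ ℤ_{≥0}. For ℓ = 1, 2, 3, let a_ℓ ∈ ℝ^{i_ℓ} and b_ℓ ∈ ℝ^{j_ℓ} be tuples such that t·(a_ℓ)_r ∉ ℤ_{≥0} for every entry, and set s_ℓ := (−1)^{i_ℓ + j_ℓ + 1}. Then the formal power series identity {}_{j_1}F_{i_1}(−t b_1; −t a_1; x) · {}_{j_2}F_{i_2}(−t b_2; −t a_2; x) = {}_{j_3}F_{i_3}(−t b_3; −t a_3; x) holds if and only if ℋ^{(t)}[b_1; a_1](s_1 z) ⊞^t ℋ^{(t)}[b_2; a_2](s_2 z) = ℋ^{(t)}[b_3; a_3](s_3 z). -/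

import Mathlib

open PowerSeries Finset

/-- Falling factorial `(t)_k = t (t-1) ⋯ (t-k+1)`. -/
noncomputable def ffall (t : ℝ) (k : ℕ) : ℝ := ∏ i ∈ Finset.range k, (t - i)

/-- The `t`-deformed convolution of formal power series. -/
noncomputable def tconv (t : ℝ) (A B : PowerSeries ℝ) : PowerSeries ℝ :=
  PowerSeries.mk fun k => ∑ p ∈ Finset.HasAntidiagonal.antidiagonal k,
    ffall t k / (ffall t p.1 * ffall t p.2)
      * (PowerSeries.coeff (R := ℝ) p.1 A) * (PowerSeries.coeff (R := ℝ) p.2 B)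

/-- Formal logarithm of a power series (with constant term 1):
`log A = - Σ_{k ≥ 1} (1 - A)^k / k`. -/
noncomputable def flog (A : PowerSeries ℝ) : PowerSeries ℝ :=
  PowerSeries.mk fun n =>
    -∑ k ∈ Finset.range (n + 1), (PowerSeries.coeff (R := ℝ) n ((1 - A) ^ k)) / k

/-- Power sums of `A ∈ 1 + zℝ⟦z⟧`, defined by `Σ p_k(A) z^k = -z (d/dz) log A(z)`. -/
noncomputable def powSum (A : PowerSeries ℝ) (k : ℕ) : ℝ :=
  -(k : ℝ) * PowerSeries.coeff (R := ℝ) k (flog A)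

/-- `E^t[A](z) = Σ_k (t^k/(t)_k) a_k z^k`. -/
noncomputable def Et (t : ℝ) (A : PowerSeries ℝ) : PowerSeries ℝ :=
  PowerSeries.mk fun k => t ^ k / ffall t k * PowerSeries.coeff (R := ℝ) k A

/-- The `t`-deformed cumulant transform `C^t[A](z) = -(z/t)(d/dz) log(E^t[A](z))`. -/
noncomputable def Ct (t : ℝ) (A : PowerSeries ℝ) : PowerSeries ℝ :=
  PowerSeries.mk fun n => -(1 / t) * ((n : ℝ) * PowerSeries.coeff (R := ℝ) n (flog (Et t A)))

/-- The `i`-th `t`-deformed cumulant of `A`. -/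
noncomputable def kappa (t : ℝ) (A : PowerSeries ℝ) (i : ℕ) : ℝ :=
  PowerSeries.coeff (R := ℝ) i (Ct t A)

/-- Falling factorial of a tuple: `(a)_k = Π_r (a_r)_k`. -/
noncomputable def ffallT {i : ℕ} (a : Fin i → ℝ) (k : ℕ) : ℝ := ∏ r, ffall (a r) k

/-- Rising factorial `(a)^{k̄} = a (a+1) ⋯ (a+k-1)`. -/
noncomputable def rfall (a : ℝ) (k : ℕ) : ℝ := ∏ m ∈ Finset.range k, (a + m)

/-- Rising factorial of a tuple. -/
noncomputable def rfallT {i : ℕ} (a : Fin i → ℝ) (k : ℕ) : ℝ := ∏ r, rfall (a r) k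

/-- The `t`-deformed hypergeometric series
`ℋ^{(t)}[b; a](z) = Σ_{k≥0} (-1)^k ((t)_k/k!) ((tb)_k/(ta)_k) z^k`. -/
noncomputable def Hgt (t : ℝ) {i j : ℕ} (b : Fin j → ℝ) (a : Fin i → ℝ) : PowerSeries ℝ :=
  PowerSeries.mk fun k =>
    (-1) ^ k * ffall t k / (k.factorial : ℝ)
      * (ffallT (fun r => t * b r) k / ffallT (fun r => t * a r) k)

/-- The generalized hypergeometric series `ₘFₙ(d; c; x)` as a formal power series. -/
noncomputable def genF {m n : ℕ} (d : Fin m → ℝ) (c : Fin n → ℝ) : PowerSeries ℝ :=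
  PowerSeries.mk fun k => (1 / (k.factorial : ℝ)) * (rfallT d k / rfallT c k)


/-!
Scaling the `k`-th coefficient by `(t)_k` turns `⊞^t` into the ordinary product, since the weight
`(t)_k / ((t)_i (t)_j)` cancels exactly, and the scaling is injective because `(t)_k ≠ 0` for
`t ∉ ℤ_{≥0}`. As `(-x)^{k̄} = (-1)^k (x)_k`, the dilated series `ℋ^{(t)}[b; a](s z)` is exactly the
scaling of `F(-tb; -ta; ·)`: the sign `s = (-1)^{i+j+1}` absorbs the factor `(-1)^k` and the signs
of the `i + j` rising factorials.
-/

noncomputable def ffallScale (t : ℝ) (F : PowerSeries ℝ) : PowerSeries ℝ :=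
  PowerSeries.mk fun k => ffall t k * coeff k F

lemma ffall_ne_zero {t : ℝ} (ht : ∀ n : ℕ, t ≠ (n : ℝ)) (k : ℕ) : ffall t k ≠ 0 :=
  Finset.prod_ne_zero_iff.mpr fun n _ => sub_ne_zero.mpr (ht n)

lemma ffallScale_injective {t : ℝ} (ht : ∀ n : ℕ, t ≠ (n : ℝ)) :
    Function.Injective (ffallScale t) := by
  intro F G hFG
  ext k
  simpa [ffallScale, ffall_ne_zero ht k] using congrArg (coeff k) hFG

lemma tconv_ffallScale {t : ℝ} (ht : ∀ n : ℕ, t ≠ (n : ℝ)) (F G : PowerSeries ℝ) :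
    tconv t (ffallScale t F) (ffallScale t G) = ffallScale t (F * G) := by
  ext k
  simp only [tconv, ffallScale, coeff_mk, coeff_mul, Finset.mul_sum]
  refine Finset.sum_congr rfl fun p _ => ?_
  field_simp [ffall_ne_zero ht p.1, ffall_ne_zero ht p.2]

lemma rfall_neg (x : ℝ) (k : ℕ) : rfall (-x) k = (-1) ^ k * ffall x k := by
  have h := Finset.prod_mul_distrib (s := range k) (f := fun _ => (-1 : ℝ)) (g := (x - ·))
  rw [Finset.prod_const, Finset.card_range] at h
  rw [rfall, ffall, ← h]
  exact Finset.prod_congr rfl fun m _ => by ring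

lemma rfallT_neg {i : ℕ} (c : Fin i → ℝ) (k : ℕ) :
    rfallT (fun r => -c r) k = (-1) ^ (k * i) * ffallT c k := by
  simp only [rfallT, ffallT, rfall_neg, Finset.prod_mul_distrib, Finset.prod_const,
    Finset.card_univ, Fintype.card_fin, pow_mul]

lemma rescale_Hgt (t : ℝ) {i j : ℕ} (b : Fin j → ℝ) (a : Fin i → ℝ) :
    rescale ((-1 : ℝ) ^ (i + j + 1)) (Hgt t b a) =
      ffallScale t (genF (fun r => -t * b r) (fun r => -t * a r)) := by
  ext k
  simp only [coeff_rescale, Hgt, genF, ffallScale, coeff_mk, neg_mul, rfallT_neg]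
  have hinv : ((-1 : ℝ) ^ (k * i))⁻¹ = (-1) ^ (k * i) := by rw [← inv_pow, inv_neg_one]
  have hsign : (-1 : ℝ) ^ ((i + j + 1) * k) * (-1) ^ k = (-1) ^ (k * j + k * i) := by
    rw [← pow_add, show (i + j + 1) * k + k = k * j + k * i + 2 * k by ring, pow_add, pow_mul,
      neg_one_sq, one_pow, mul_one]
  rw [mul_div_mul_comm, div_eq_mul_inv ((-1 : ℝ) ^ (k * j)), hinv, ← pow_add, ← hsign]
  ring

theorem hypergeometric_tconv_iff_general (t : ℝ) (ht : ∀ n : ℕ, t ≠ (n : ℝ))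
    {i₁ j₁ i₂ j₂ i₃ j₃ : ℕ}
    (a₁ : Fin i₁ → ℝ) (b₁ : Fin j₁ → ℝ)
    (a₂ : Fin i₂ → ℝ) (b₂ : Fin j₂ → ℝ)
    (a₃ : Fin i₃ → ℝ) (b₃ : Fin j₃ → ℝ) :
    genF (fun r => -t * b₁ r) (fun r => -t * a₁ r) *
        genF (fun r => -t * b₂ r) (fun r => -t * a₂ r) =
      genF (fun r => -t * b₃ r) (fun r => -t * a₃ r) ↔
    tconv t (PowerSeries.rescale ((-1 : ℝ) ^ (i₁ + j₁ + 1)) (Hgt t b₁ a₁))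
        (PowerSeries.rescale ((-1 : ℝ) ^ (i₂ + j₂ + 1)) (Hgt t b₂ a₂)) =
      PowerSeries.rescale ((-1 : ℝ) ^ (i₃ + j₃ + 1)) (Hgt t b₃ a₃) := by
  rw [rescale_Hgt, rescale_Hgt, rescale_Hgt, tconv_ffallScale ht,
    (ffallScale_injective ht).eq_iff]

/-- The product identity for generalized hypergeometric series holds if and only if the
corresponding `⊞^t`-convolution identity for `t`-deformed hypergeometric series holds
(with dilations by `s_ℓ = (-1)^{i_ℓ + j_ℓ + 1}`). -/
theorem hypergeometric_tconv_iff (t : ℝ) (ht : ∀ n : ℕ, t ≠ (n : ℝ))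
    {i₁ j₁ i₂ j₂ i₃ j₃ : ℕ}
    (a₁ : Fin i₁ → ℝ) (b₁ : Fin j₁ → ℝ)
    (a₂ : Fin i₂ → ℝ) (b₂ : Fin j₂ → ℝ)
    (a₃ : Fin i₃ → ℝ) (b₃ : Fin j₃ → ℝ)
    (ha₁ : ∀ r, ∀ n : ℕ, t * a₁ r ≠ (n : ℝ))
    (ha₂ : ∀ r, ∀ n : ℕ, t * a₂ r ≠ (n : ℝ))
    (ha₃ : ∀ r, ∀ n : ℕ, t * a₃ r ≠ (n : ℝ)) :
    genF (fun r => -t * b₁ r) (fun r => -t * a₁ r) *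
        genF (fun r => -t * b₂ r) (fun r => -t * a₂ r) =
      genF (fun r => -t * b₃ r) (fun r => -t * a₃ r) ↔
    tconv t (PowerSeries.rescale ((-1 : ℝ) ^ (i₁ + j₁ + 1)) (Hgt t b₁ a₁))
        (PowerSeries.rescale ((-1 : ℝ) ^ (i₂ + j₂ + 1)) (Hgt t b₂ a₂)) =
      PowerSeries.rescale ((-1 : ℝ) ^ (i₃ + j₃ + 1)) (Hgt t b₃ a₃) :=
  hypergeometric_tconv_iff_general t ht a₁ b₁ a₂ b₂ a₃ b₃
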